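/- Let G be a finite simple graph on n vertices and S a nonempty proper subset of its vertices such that the subgraph induced on V∖S is connected. Then the smallest eigenvalue of the grounded Laplacian L_g(S) is a simple eigenvalue, and every nonzero eigenvector corresponding to it has all components of one strict sign; in particular it admits an eigenvector with all components strictly positive, unique up to positive scaling when normalized so that its largest component equals 1. -/

import Mathlib

open Filter

/-- The Laplacian matrix of a finite simple graph, over `ℝ`. -/
noncomputable def lapR {V : Type*} [Fintype V] [DecidableEq V] (G : SimpleGraph V) :
    Matrix V V ℝ :=
  letI := Classical.decRel G.Adj
  SimpleGraph.lapMatrix ℝ G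

/-- The grounded Laplacian: the principal submatrix of the Laplacian obtained by deleting
the rows and columns indexed by the grounded set `S`. -/
noncomputable def groundedLaplacian {V : Type*} [Fintype V] [DecidableEq V]
    (G : SimpleGraph V) (S : Finset V) :
    Matrix {v : V // v ∉ S} {v : V // v ∉ S} ℝ :=
  (lapR G).submatrix Subtype.val Subtype.val

/-- The number of edges of `G` with exactly one endpoint in `X` (counted once per edge). -/
noncomputable def boundaryCard {V : Type*} [Fintype V] [DecidableEq V]
    (G : SimpleGraph V) (X : Finset V) : ℕ :=
  letI := Classical.decRel G.Adj
  (Finset.univ.filter fun p : V × V => p.1 ∈ X ∧ p.2 ∉ X ∧ G.Adj p.1 p.2).card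

/-- `lam` is the smallest (real) eigenvalue of the matrix `M`. -/
def IsSmallestEigenvalue {m : Type*} [Fintype m] (M : Matrix m m ℝ) (lam : ℝ) : Prop :=
  (∃ x : m → ℝ, x ≠ 0 ∧ M.mulVec x = lam • x) ∧
  ∀ μ : ℝ, (∃ x : m → ℝ, x ≠ 0 ∧ M.mulVec x = μ • x) → lam ≤ μ

/-- The second-smallest root (with multiplicity) of the characteristic polynomial of `M`. -/
noncomputable def secondSmallestEigenvalue {m : Type*} [Fintype m] [DecidableEq m]
    (M : Matrix m m ℝ) : ℝ :=
  (M.charpoly.roots.sort (· ≤ ·)).getD 1 0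

/-- The subgraph induced on the complement of `S`, as a graph on the subtype. -/
def inducedSub {V : Type*} [DecidableEq V] (G : SimpleGraph V) (S : Finset V) :
    SimpleGraph {v : V // v ∉ S} :=
  SimpleGraph.comap Subtype.val G

/-- The degree of vertex `v` in `G`. -/
noncomputable def degOf {V : Type*} [Fintype V] [DecidableEq V] (G : SimpleGraph V) (v : V) : ℕ :=
  letI := Classical.decRel G.Adj
  G.degree v

/-!
Shifting by the smallest eigenvalue, `M = L_g(S) - λ I` is positive semidefinite with nonpositive
off-diagonal entries, and the eigenvectors for `λ` are the null vectors of `M`. For such `M` the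
quadratic form can only decrease when `x` is replaced by `|x|`, so `|x|` is again a null vector,
and equality forces `x i * x j ≥ 0` whenever `M i j < 0`, i.e. along every edge of the induced
graph. A nonnegative null vector vanishing at a vertex vanishes at its neighbours, so by
connectivity `|x|` is strictly positive and `x` has constant strict sign. Two null vectors whose
difference vanishes at some vertex therefore coincide, which gives simplicity and the uniqueness
of the normalised positive eigenvector.
-/

open Finset Matrix

theorem SimpleGraph.Reachable.imp_of_adj {V : Type*} {G : SimpleGraph V} {P : V → Prop}
    (hP : ∀ a b, G.Adj a b → P a → P b) {u v : V} (huv : G.Reachable u v) (hu : P u) : P v := by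
  obtain ⟨w⟩ := huv
  induction w with
  | nil => exact hu
  | cons hadj _ ih => exact ih (hP _ _ hadj hu)

theorem exists_mul_le_one_and_eq_one {ι : Type*} [Finite ι] [Nonempty ι] {z : ι → ℝ}
    (hz : ∀ i, 0 < z i) : ∃ c : ℝ, 0 < c ∧ (∀ i, c * z i ≤ 1) ∧ ∃ i, c * z i = 1 := by
  obtain ⟨i₀, hi₀⟩ := Finite.exists_max z
  refine ⟨(z i₀)⁻¹, inv_pos.2 (hz i₀), fun i => ?_, i₀, inv_mul_cancel₀ (hz i₀).ne'⟩
  rw [inv_mul_le_iff₀ (hz i₀), mul_one]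
  exact hi₀ i

theorem eq_of_eq_smul_of_max_eq_one {ι : Type*} {x y : ι → ℝ} {a : ℝ} (hx : 0 ≤ x)
    (hx₁ : ∀ i, x i ≤ 1) (hxi : ∃ i, x i = 1) (hy₁ : ∀ i, y i ≤ 1) (hyj : ∃ j, y j = 1)
    (h : y = a • x) : y = x := by
  obtain ⟨i, hi⟩ := hxi
  obtain ⟨j, hj⟩ := hyj
  have hai : a ≤ 1 := by simpa [h, hi] using hy₁ i
  have haj : a * x j = 1 := by simpa [h] using hj
  have hxj : x j = 1 := by nlinarith [mul_nonneg (sub_nonneg.2 hai) (hx j), hx₁ j]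
  rw [hxj, mul_one] at haj
  rw [h, haj, one_smul]

theorem Matrix.mulVec_sub_smul_one_eq_zero_iff {m R : Type*} [Fintype m] [DecidableEq m]
    [CommRing R] {A : Matrix m m R} {c : R} {x : m → R} :
    (A - c • 1) *ᵥ x = 0 ↔ A *ᵥ x = c • x := by
  rw [sub_mulVec, smul_mulVec, one_mulVec, sub_eq_zero]

theorem IsSmallestEigenvalue.posSemidef_sub_smul_one {m : Type*} [Fintype m] [DecidableEq m]
    {A : Matrix m m ℝ} {lam : ℝ} (h : IsSmallestEigenvalue A lam) (hA : A.IsHermitian) :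
    (A - lam • 1).PosSemidef := by
  have hB : (A - lam • 1).IsHermitian := hA.sub (isHermitian_one.smul (.all lam))
  refine hB.posSemidef_iff_eigenvalues_nonneg.2 fun i => ?_
  have hu : (hB.eigenvectorBasis i).ofLp ≠ 0 := by
    rw [Ne, WithLp.ofLp_eq_zero]
    exact hB.eigenvectorBasis.orthonormal.ne_zero i
  have hAu : A *ᵥ (hB.eigenvectorBasis i).ofLp =
      (hB.eigenvalues i + lam) • (hB.eigenvectorBasis i).ofLp := by
    have := hB.mulVec_eigenvectorBasis i
    rw [sub_mulVec, smul_mulVec, one_mulVec, sub_eq_iff_eq_add] at this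
    rw [this, add_smul]
  have := h.2 _ ⟨_, hu, hAu⟩
  change 0 ≤ hB.eigenvalues i
  linarith

namespace Matrix

variable {m : Type*} {M : Matrix m m ℝ}

theorem dotProduct_mulVec_sub_abs [Fintype m] (M : Matrix m m ℝ) (x : m → ℝ) :
    x ⬝ᵥ M *ᵥ x - |x| ⬝ᵥ M *ᵥ |x| = ∑ i, ∑ j, M i j * (x i * x j - |x i * x j|) := by
  simp only [dotProduct, mulVec, Pi.abs_apply, Finset.mul_sum, ← Finset.sum_sub_distrib, abs_mul]
  exact sum_congr rfl fun i _ => sum_congr rfl fun j _ => by ring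

theorem entry_mul_sub_abs_nonneg (hoff : ∀ i j, i ≠ j → M i j ≤ 0) (x : m → ℝ) (i j : m) :
    0 ≤ M i j * (x i * x j - |x i * x j|) := by
  rcases eq_or_ne i j with rfl | hij
  · simp
  · exact mul_nonneg_of_nonpos_of_nonpos (hoff i j hij) (sub_nonpos.2 (le_abs_self _))

variable [Fintype m]

theorem abs_dotProduct_mulVec_abs_le (hoff : ∀ i j, i ≠ j → M i j ≤ 0) (x : m → ℝ) :
    |x| ⬝ᵥ M *ᵥ |x| ≤ x ⬝ᵥ M *ᵥ x := by
  have := dotProduct_mulVec_sub_abs M x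
  have : 0 ≤ ∑ i, ∑ j, M i j * (x i * x j - |x i * x j|) :=
    sum_nonneg fun i _ => sum_nonneg fun j _ => entry_mul_sub_abs_nonneg hoff x i j
  linarith

theorem PosSemidef.mulVec_abs_eq_zero (hM : M.PosSemidef) (hoff : ∀ i j, i ≠ j → M i j ≤ 0)
    {x : m → ℝ} (hx : M *ᵥ x = 0) : M *ᵥ |x| = 0 := by
  rw [← hM.dotProduct_mulVec_zero_iff, star_trivial]
  refine le_antisymm ?_ (by simpa using hM.dotProduct_mulVec_nonneg |x|)
  simpa [hx] using abs_dotProduct_mulVec_abs_le hoff x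

theorem PosSemidef.mul_nonneg_of_mulVec_eq_zero (hM : M.PosSemidef)
    (hoff : ∀ i j, i ≠ j → M i j ≤ 0) {x : m → ℝ} (hx : M *ᵥ x = 0) {i j : m}
    (hij : M i j < 0) : 0 ≤ x i * x j := by
  have hsum := dotProduct_mulVec_sub_abs M x
  rw [hx, hM.mulVec_abs_eq_zero hoff hx, dotProduct_zero, dotProduct_zero, sub_zero, eq_comm,
    sum_eq_zero_iff_of_nonneg fun i _ => sum_nonneg fun j _ => entry_mul_sub_abs_nonneg hoff x i j]
    at hsum
  have hterm := (sum_eq_zero_iff_of_nonneg fun j _ => entry_mul_sub_abs_nonneg hoff x i j).1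
    (hsum i (mem_univ i)) j (mem_univ j)
  rw [mul_eq_zero, sub_eq_zero] at hterm
  exact hterm.resolve_left hij.ne ▸ abs_nonneg _

theorem apply_eq_zero_of_mulVec_apply_eq_zero (hoff : ∀ i j, i ≠ j → M i j ≤ 0) {z : m → ℝ}
    (hz : 0 ≤ z) {a b : m} (hMz : (M *ᵥ z) b = 0) (hb : z b = 0) (hba : M b a < 0) :
    z a = 0 := by
  have hterms : ∀ k ∈ univ, M b k * z k ≤ 0 := by
    intro k _
    rcases eq_or_ne b k with rfl | hk
    · simp [hb]
    · exact mul_nonpos_of_nonpos_of_nonneg (hoff b k hk) (hz k)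
  exact (mul_eq_zero.1 ((sum_eq_zero_iff_of_nonpos hterms).1 hMz a (mem_univ a))).resolve_left
    hba.ne

variable {H : SimpleGraph m}

theorem pos_of_mulVec_eq_zero (hoff : ∀ i j, i ≠ j → M i j ≤ 0) (hH : H.Connected)
    (hadj : ∀ i j, H.Adj i j → M i j < 0) {z : m → ℝ} (hMz : M *ᵥ z = 0) (hz : 0 ≤ z)
    (hz₀ : z ≠ 0) (i : m) : 0 < z i := by
  obtain ⟨i₀, hi₀⟩ := Function.ne_iff.1 hz₀
  refine (hH i₀ i).imp_of_adj (P := fun k => 0 < z k) (fun a b hab ha => ?_) ((hz i₀).lt_of_ne' hi₀)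
  exact (hz b).lt_of_ne' fun hb => ha.ne'
    (apply_eq_zero_of_mulVec_apply_eq_zero hoff hz (congrFun hMz b) hb (hadj b a hab.symm))

theorem PosSemidef.pos_or_neg_of_mulVec_eq_zero (hM : M.PosSemidef)
    (hoff : ∀ i j, i ≠ j → M i j ≤ 0) (hH : H.Connected) (hadj : ∀ i j, H.Adj i j → M i j < 0)
    {x : m → ℝ} (hMx : M *ᵥ x = 0) (hx : x ≠ 0) : (∀ i, 0 < x i) ∨ (∀ i, x i < 0) := by
  have hne : ∀ i, x i ≠ 0 := fun i => abs_pos.1 <|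
    pos_of_mulVec_eq_zero hoff hH hadj (hM.mulVec_abs_eq_zero hoff hMx) (abs_nonneg x)
      (by simpa using hx) i
  have hsame : ∀ a b, H.Adj a b → 0 ≤ x a * x b := fun a b hab =>
    hM.mul_nonneg_of_mulVec_eq_zero hoff hMx (hadj a b hab)
  obtain ⟨i₀⟩ := hH.nonempty
  rcases (hne i₀).lt_or_gt with hneg | hpos
  · exact .inr fun i => (hH i₀ i).imp_of_adj (fun a b hab ha =>
      (nonpos_of_mul_nonneg_right (hsame a b hab) ha).lt_of_ne (hne b)) hneg
  · exact .inl fun i => (hH i₀ i).imp_of_adj (fun a b hab ha =>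
      (nonneg_of_mul_nonneg_right (hsame a b hab) ha).lt_of_ne' (hne b)) hpos

theorem PosSemidef.exists_eq_smul_of_mulVec_eq_zero (hM : M.PosSemidef)
    (hoff : ∀ i j, i ≠ j → M i j ≤ 0) (hH : H.Connected) (hadj : ∀ i j, H.Adj i j → M i j < 0)
    {x y : m → ℝ} (hMx : M *ᵥ x = 0) (hx : x ≠ 0) (hMy : M *ᵥ y = 0) : ∃ a : ℝ, y = a • x := by
  obtain ⟨i₀⟩ := hH.nonempty
  have hxi₀ : x i₀ ≠ 0 := by
    rcases hM.pos_or_neg_of_mulVec_eq_zero hoff hH hadj hMx hx with h | h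
    exacts [(h i₀).ne', (h i₀).ne]
  refine ⟨y i₀ / x i₀, sub_eq_zero.1 (by_contra fun hz => ?_)⟩
  have hzi₀ : (y - (y i₀ / x i₀) • x) i₀ = 0 := by simp [div_mul_cancel₀ _ hxi₀]
  rcases hM.pos_or_neg_of_mulVec_eq_zero hoff hH hadj (by simp [mulVec_sub, mulVec_smul, hMx, hMy])
    hz with h | h
  exacts [(h i₀).ne' hzi₀, (h i₀).ne hzi₀]

theorem PosSemidef.existsUnique_pos_max_eq_one_of_mulVec_eq_zero (hM : M.PosSemidef)
    (hoff : ∀ i j, i ≠ j → M i j ≤ 0) (hH : H.Connected) (hadj : ∀ i j, H.Adj i j → M i j < 0)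
    {x : m → ℝ} (hMx : M *ᵥ x = 0) (hx : x ≠ 0) :
    ∃! u : m → ℝ, (∀ i, 0 < u i) ∧ (∀ i, u i ≤ 1) ∧ (∃ i, u i = 1) ∧ M *ᵥ u = 0 := by
  have hMabs := hM.mulVec_abs_eq_zero hoff hMx
  have habs := pos_of_mulVec_eq_zero hoff hH hadj hMabs (abs_nonneg x) (by simpa using hx)
  have := hH.nonempty
  obtain ⟨c, hc, hc₁, i₁, hi₁⟩ := exists_mul_le_one_and_eq_one habs
  refine ⟨c • |x|, ⟨fun i => mul_pos hc (habs i), hc₁, ⟨i₁, hi₁⟩, by rw [mulVec_smul, hMabs,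
    smul_zero]⟩, fun y ⟨_, hy₁, hyj, hMy⟩ => ?_⟩
  obtain ⟨a, rfl⟩ := hM.exists_eq_smul_of_mulVec_eq_zero hoff hH hadj
    (by rw [mulVec_smul, hMabs, smul_zero]) (smul_ne_zero hc.ne' (by simpa using hx)) hMy
  exact eq_of_eq_smul_of_max_eq_one (fun i => (mul_pos hc (habs i)).le) hc₁ ⟨i₁, hi₁⟩ hy₁ hyj rfl

end Matrix

section GroundedLaplacian

variable {V : Type*} [Fintype V] [DecidableEq V] (G : SimpleGraph V) (S : Finset V)

theorem groundedLaplacian_isHermitian : (groundedLaplacian G S).IsHermitian := by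
  classical
  exact (G.isHermitian_lapMatrix ℝ).submatrix _

theorem groundedLaplacian_apply_nonpos_of_ne {i j : {v : V // v ∉ S}} (hij : i ≠ j) :
    groundedLaplacian G S i j ≤ 0 := by
  classical
  have hij' : (i : V) ≠ j := Subtype.val_injective.ne hij
  simp only [groundedLaplacian, lapR, SimpleGraph.lapMatrix, submatrix_apply, Matrix.sub_apply,
    SimpleGraph.degMatrix, diagonal_apply_ne _ hij', SimpleGraph.adjMatrix_apply, zero_sub]
  split_ifs <;> norm_num

theorem groundedLaplacian_apply_of_adj {i j : {v : V // v ∉ S}} (hij : (inducedSub G S).Adj i j) :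
    groundedLaplacian G S i j = -1 := by
  classical
  have hadj : G.Adj i j := hij
  simp [groundedLaplacian, lapR, SimpleGraph.lapMatrix, SimpleGraph.degMatrix, hadj.ne, hadj]

end GroundedLaplacian

theorem grounded_laplacian_perron_general {n : ℕ} (G : SimpleGraph (Fin n))
    (S : Finset (Fin n))
    (hind : (inducedSub G S).Connected)
    (lam : ℝ) (hlam : IsSmallestEigenvalue (groundedLaplacian G S) lam) :
    (∀ x y : {v : Fin n // v ∉ S} → ℝ, x ≠ 0 →
      (groundedLaplacian G S).mulVec x = lam • x →
      (groundedLaplacian G S).mulVec y = lam • y → ∃ a : ℝ, y = a • x) ∧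
    (∀ x : {v : Fin n // v ∉ S} → ℝ, x ≠ 0 →
      (groundedLaplacian G S).mulVec x = lam • x →
      (∀ i, 0 < x i) ∨ (∀ i, x i < 0)) ∧
    (∃! x : {v : Fin n // v ∉ S} → ℝ,
      (∀ i, 0 < x i) ∧ (∀ i, x i ≤ 1) ∧ (∃ i, x i = 1) ∧
      (groundedLaplacian G S).mulVec x = lam • x) := by
  set M := groundedLaplacian G S - lam • 1
  have hM : M.PosSemidef := hlam.posSemidef_sub_smul_one (groundedLaplacian_isHermitian G S)
  have hoff : ∀ i j, i ≠ j → M i j ≤ 0 := fun i j hij => by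
    simpa [M, one_apply_ne hij] using groundedLaplacian_apply_nonpos_of_ne G S hij
  have hadj : ∀ i j, (inducedSub G S).Adj i j → M i j < 0 := fun i j hij => by
    simp [M, one_apply_ne hij.ne, groundedLaplacian_apply_of_adj G S hij]
  obtain ⟨x, hx, hLx⟩ := hlam.1
  simp only [← mulVec_sub_smul_one_eq_zero_iff] at hLx ⊢
  exact ⟨fun x y hx hMx hMy => hM.exists_eq_smul_of_mulVec_eq_zero hoff hind hadj hMx hx hMy,
    fun x hx hMx => hM.pos_or_neg_of_mulVec_eq_zero hoff hind hadj hMx hx,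
    hM.existsUnique_pos_max_eq_one_of_mulVec_eq_zero hoff hind hadj hLx hx⟩

/-- If the subgraph induced on the non-grounded vertices is connected, then the
smallest eigenvalue of the grounded Laplacian is simple (its eigenvectors are all proportional),
every nonzero eigenvector for it has all components of one strict sign, and there is a unique
eigenvector with all components strictly positive whose largest component equals `1`. -/
theorem grounded_laplacian_perron {n : ℕ} (G : SimpleGraph (Fin n))
    (S : Finset (Fin n)) (hS : S.Nonempty) (hSp : S ⊂ Finset.univ)
    (hind : (inducedSub G S).Connected)
    (lam : ℝ) (hlam : IsSmallestEigenvalue (groundedLaplacian G S) lam) :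
    (∀ x y : {v : Fin n // v ∉ S} → ℝ, x ≠ 0 →
      (groundedLaplacian G S).mulVec x = lam • x →
      (groundedLaplacian G S).mulVec y = lam • y → ∃ a : ℝ, y = a • x) ∧
    (∀ x : {v : Fin n // v ∉ S} → ℝ, x ≠ 0 →
      (groundedLaplacian G S).mulVec x = lam • x →
      (∀ i, 0 < x i) ∨ (∀ i, x i < 0)) ∧
    (∃! x : {v : Fin n // v ∉ S} → ℝ,
      (∀ i, 0 < x i) ∧ (∀ i, x i ≤ 1) ∧ (∃ i, x i = 1) ∧
      (groundedLaplacian G S).mulVec x = lam • x) :=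
  grounded_laplacian_perron_general G S hind lam hlam
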